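/- Let H be a tree and let v ∈ V(H). Then H admits a (v)-rooted contractible ordering. -/
import Mathlib


open SimpleGraph

section Defs

variable {V W : Type*}

/-- An `H`-minor in `G` given by branch sets `μ`: the branch sets are pairwise disjoint,
each induces a connected subgraph of `G`, and every edge of `H` is realized by an edge of `G`
between the corresponding branch sets. -/
def IsMinorMap (G : SimpleGraph V) (H : SimpleGraph W) (μ : W → Set V) : Prop :=
  (∀ w, (G.induce (μ w)).Connected) ∧
  (Pairwise fun w₁ w₂ => Disjoint (μ w₁) (μ w₂)) ∧
  (∀ ⦃w₁ w₂⦄, H.Adj w₁ w₂ → ∃ a ∈ μ w₁, ∃ b ∈ μ w₂, G.Adj a b)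

/-- The apex graph `H⁺`: a new vertex (`none`) joined to every vertex of `H`. -/
def apexGraph (H : SimpleGraph W) : SimpleGraph (Option W) :=
  SimpleGraph.fromRel fun a b =>
    a = none ∨ ∃ u v, a = some u ∧ b = some v ∧ H.Adj u v

/-- The set `ω_{[s]}` of the first `s` vertices of the ordering `ω`. -/
def prevSet {t : ℕ} (ω : Fin t ≃ V) (s : ℕ) : Set V := ω '' {i | (i : ℕ) < s}

/-- The neighbours of the vertex `ω s` among the earlier vertices `ω_{[s]}`. -/
def nbrs (H : SimpleGraph V) {t : ℕ} (ω : Fin t ≃ V) (s : Fin t) : Set V :=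
  {v | v ∈ prevSet ω (s : ℕ) ∧ H.Adj (ω s) v}

/-- A recursive ordering: every vertex has at most two neighbours among the earlier
vertices, and if it has exactly two then those two are adjacent. -/
def IsRecursiveOrdering (H : SimpleGraph V) {t : ℕ} (ω : Fin t ≃ V) : Prop :=
  ∀ s : Fin t, (nbrs H ω s).ncard ≤ 2 ∧
    ∀ a ∈ nbrs H ω s, ∀ b ∈ nbrs H ω s, a ≠ b → H.Adj a b

/-- The graph `H[S]/ab` obtained from the induced subgraph on `S` by contracting the
edge `ab` (the vertex `b` is merged into `a`). -/
def contractOn (H : SimpleGraph V) (S : Set V) (a b : V) :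
    SimpleGraph ↥(S \ {b}) :=
  SimpleGraph.fromRel fun x y =>
    H.Adj (x : V) (y : V) ∨ ((x : V) = a ∧ H.Adj b (y : V)) ∨
      ((y : V) = a ∧ H.Adj (x : V) b)

variable [Fintype V]

/-- A contractible ordering of `H`. -/
def IsContractibleOrdering (H : SimpleGraph V)
    (Ω : Set (Fin (Fintype.card V) ≃ V)) : Prop :=
  Ω.Nonempty ∧ (∀ ω ∈ Ω, IsRecursiveOrdering H ω) ∧
    ∀ ω ∈ Ω, ∀ s : Fin (Fintype.card V), ∀ a ∈ nbrs H ω s, ∀ b ∈ nbrs H ω s, a ≠ b →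
      ∃ ω' ∈ Ω,
        Nonempty ((H.induce (prevSet ω' ((s : ℕ) - 1))) ≃g
          contractOn H (prevSet ω (s : ℕ)) a b)

/-- A graph is contractibly orderable if it admits a contractible ordering. -/
def ContractiblyOrderable (H : SimpleGraph V) : Prop :=
  ∃ Ω, IsContractibleOrdering H Ω

end Defs

section Rooted

variable {V : Type*} [Fintype V]

/-- A `ρ`-rooted contractible ordering of `H`. -/
def IsRootedContractibleOrdering (H : SimpleGraph V) (ρ : List V)
    (Ω : Set (Fin (Fintype.card V) ≃ V)) : Prop :=
  Ω.Nonempty ∧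
  (∀ ω ∈ Ω, IsRecursiveOrdering H ω) ∧
  (∀ ω ∈ Ω, ∀ (i : ℕ) (hi : i < ρ.length) (hit : i < Fintype.card V),
      ω ⟨i, hit⟩ = ρ.get ⟨i, hi⟩) ∧
  ∀ ω ∈ Ω, ∀ s : Fin (Fintype.card V), 3 ≤ (s : ℕ) →
    ∀ a ∈ nbrs H ω s, ∀ b ∈ nbrs H ω s, a ≠ b →
      ({a, b} : Set V) ≠ {x | x ∈ ρ} ∧
      ∃ ω' ∈ Ω, ∃ φ : (H.induce (prevSet ω' ((s : ℕ) - 1))) ≃g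
          contractOn H (prevSet ω (s : ℕ)) a b,
        ∀ x : ↥(prevSet ω' ((s : ℕ) - 1)), (x : V) ∈ ρ → ((φ x : ↥(prevSet ω (s : ℕ) \ {b})) : V) = (x : V)

/-- Auxiliary notion: `H` contracts, along the edge from `a` to `b` (merging `b` into `a`),
to the graph induced by the first `t-1` vertices of some ordering in `Ω`, by an isomorphism
fixing the roots listed in `ρ` (up to the `min(m, t-1)` first ones). -/
def ContractsTo (H : SimpleGraph V) (ρ : List V)
    (Ω : Set (Fin (Fintype.card V) ≃ V)) (a b : V) : Prop :=
  ∃ ω ∈ Ω, ∃ φ : (H.induce (prevSet ω (Fintype.card V - 1))) ≃g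
      contractOn H Set.univ a b,
    ∀ x : ↥(prevSet ω (Fintype.card V - 1)), (x : V) ∈ ρ.take (Fintype.card V - 1) →
      ((φ x : ↥(Set.univ \ {b} : Set V)) : V) = (x : V)

/-- The edge `ab` of `H` is `ρ`-contractible with witness `Ω`. -/
def IsContractibleEdgeW (H : SimpleGraph V) (ρ : List V) (a b : V)
    (Ω : Set (Fin (Fintype.card V) ≃ V)) : Prop :=
  H.Adj a b ∧ IsRootedContractibleOrdering H ρ Ω ∧
    (ContractsTo H ρ Ω a b ∨ ContractsTo H ρ Ω b a)

/-- The edge `ab` of `H` is `ρ`-contractible. -/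
def IsContractibleEdge (H : SimpleGraph V) (ρ : List V) (a b : V) : Prop :=
  ∃ Ω, IsContractibleEdgeW H ρ a b Ω

end Rooted

private lemma tree_unique_parent {V : Type*} {H : SimpleGraph V} (hT : H.IsTree)
    (v w u₁ u₂ : V) (h₁ : H.Adj w u₁) (h₂ : H.Adj w u₂)
    (d₁ : H.dist v u₁ ≤ H.dist v w) (d₂ : H.dist v u₂ ≤ H.dist v w) : u₁ = u₂ := by
  classical
  have key : ∀ u, H.Adj w u → H.dist v u ≤ H.dist v w →
      ∃ p : H.Walk v u, p.IsPath ∧ w ∉ p.support := by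
    intro u hadj hle
    obtain ⟨p, hp, hlen⟩ := hT.isConnected.exists_path_of_dist v u
    refine ⟨p, hp, fun hw => ?_⟩
    have h1 : H.dist v w ≤ (p.takeUntil w hw).length := SimpleGraph.dist_le _
    have h2 := p.length_takeUntil_le hw
    have h3 := congr_arg SimpleGraph.Walk.length (p.take_spec hw)
    rw [SimpleGraph.Walk.length_append] at h3
    have h4 : (p.dropUntil w hw).length = 0 := by omega
    exact hadj.ne (SimpleGraph.Walk.eq_of_length_eq_zero h4)
  obtain ⟨p₁, hp₁, hw₁⟩ := key u₁ h₁ d₁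
  obtain ⟨p₂, hp₂, hw₂⟩ := key u₂ h₂ d₂
  have q₁ : (p₁.concat h₁.symm).IsPath := by
    rw [← SimpleGraph.Walk.isPath_reverse_iff, SimpleGraph.Walk.reverse_concat]
    exact hp₁.reverse.cons (by simpa [SimpleGraph.Walk.support_reverse] using hw₁)
  have q₂ : (p₂.concat h₂.symm).IsPath := by
    rw [← SimpleGraph.Walk.isPath_reverse_iff, SimpleGraph.Walk.reverse_concat]
    exact hp₂.reverse.cons (by simpa [SimpleGraph.Walk.support_reverse] using hw₂)
  have huniq := (SimpleGraph.isAcyclic_iff_path_unique.mp hT.IsAcyclic)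
    ⟨_, q₁⟩ ⟨_, q₂⟩
  have heq : p₁.concat h₁.symm = p₂.concat h₂.symm := congrArg Subtype.val huniq
  exact (SimpleGraph.Walk.concat_inj heq).1

/-- Every tree admits a `(v)`-rooted contractible ordering, for any vertex `v`. -/
theorem tree_rooted_contractible_ordering
    {V : Type*} [Fintype V] (H : SimpleGraph V) (hT : H.IsTree) (v : V) :
    ∃ Ω, IsRootedContractibleOrdering H [v] Ω := by
  classical
  set key : V → ℕ := fun u => H.dist v u with hkey
  set l : List V := (Finset.univ.toList (α := V)).mergeSort
      (fun a b => decide (key a ≤ key b)) with hl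
  have hperm : l.Perm Finset.univ.toList := List.mergeSort_perm _ _
  have hnd : l.Nodup := hperm.nodup_iff.mpr (Finset.nodup_toList _)
  have hmem : ∀ x : V, x ∈ l := fun x =>
    hperm.mem_iff.mpr (Finset.mem_toList.mpr (Finset.mem_univ x))
  have hsorted : l.Pairwise (fun a b => key a ≤ key b) := by
    have := List.pairwise_mergeSort (le := fun a b => decide (key a ≤ key b))
      (fun a b c h1 h2 => by simp at h1 h2 ⊢; omega)
      (fun a b => by simp; omega) (Finset.univ.toList (α := V))
    rw [← hl] at this
    simpa [List.Pairwise] using this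
  have hlen : l.length = Fintype.card V :=
    hperm.length_eq.trans (Finset.length_toList _)
  set ω : Fin (Fintype.card V) ≃ V :=
    (finCongr hlen.symm).trans (hnd.getEquivOfForallMemList l hmem) with hω
  have hmono : ∀ i j : Fin (Fintype.card V), i < j → key (ω i) ≤ key (ω j) := by
    intro i j hij
    have hi' : ω i = l.get (Fin.cast hlen.symm i) := rfl
    have hj' : ω j = l.get (Fin.cast hlen.symm j) := rfl
    rw [hi', hj']
    exact hsorted.rel_get_of_lt (Fin.lt_def.mpr (Fin.lt_def.mp hij))
  have hsub : ∀ s : Fin (Fintype.card V), ∀ a ∈ nbrs H ω s, ∀ b ∈ nbrs H ω s, a = b := by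
    intro s a ha b hb
    obtain ⟨⟨i, hi, rfl⟩, hadja⟩ := ha
    obtain ⟨⟨j, hj, rfl⟩, hadjb⟩ := hb
    have di : key (ω i) ≤ key (ω s) := hmono i s (Fin.lt_def.mpr hi)
    have dj : key (ω j) ≤ key (ω s) := hmono j s (Fin.lt_def.mpr hj)
    exact tree_unique_parent hT v (ω s) (ω i) (ω j) hadja hadjb di dj
  have hncard : ∀ s : Fin (Fintype.card V), (nbrs H ω s).ncard ≤ 1 := by
    intro s
    exact (Set.ncard_le_one_iff (Set.toFinite _)).mpr (fun ha hb => hsub s _ ha _ hb)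
  have h0 : ∀ hit : 0 < Fintype.card V, ω ⟨0, hit⟩ = v := by
    intro hit
    set i0 := ω.symm v with hi0
    rcases eq_or_ne i0 ⟨0, hit⟩ with h | h
    · rw [← h]; exact ω.apply_symm_apply v
    · have hne : (i0 : ℕ) ≠ 0 := fun hc => h (Fin.ext hc)
      have hlt : (⟨0, hit⟩ : Fin (Fintype.card V)) < i0 :=
        Fin.lt_def.mpr (Nat.pos_of_ne_zero hne)
      have h1 : key (ω ⟨0, hit⟩) ≤ key (ω i0) := hmono _ _ hlt
      rw [hi0, ω.apply_symm_apply] at h1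
      have hz : key (ω ⟨0, hit⟩) = 0 := by
        simpa [hkey, SimpleGraph.dist_self] using h1
      exact ((hT.isConnected.dist_eq_zero_iff).mp hz).symm
  refine ⟨{ω}, ⟨ω, rfl⟩, ?_, ?_, ?_⟩
  · rintro ω' rfl s
    refine ⟨le_trans (hncard s) one_le_two, fun a ha b hb hab => absurd (hsub s a ha b hb) hab⟩
  · rintro ω' rfl i hi hit
    have hi0 : i = 0 := Nat.lt_one_iff.mp (by simpa using hi)
    subst hi0
    simpa using h0 hit
  · rintro ω' rfl s _ a ha b hb hab
    exact absurd (hsub s a ha b hb) hab
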